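/- Let G be a finite connected weighted graph, n ∈ (1,∞), κ ∈ ℝ, and suppose f : V → ℂ is a nonzero eigenfunction of −Δ with eigenvalue λ > 0 which satisfies CD(n,κ). Then at each vertex x ∈ V: (−Δ)(|∇f|²)(x) ≤ (2λ − 2κ)·|∇f|²(x) − (4/n)·λ²·|f(x)|². -/

import Mathlib

/-!
For an eigenfunction, `Δf = c f` with `c = -λ` real, the bilinearity of `Γ` turns the definition
of `Γ₂` into the exact identity `Γ₂(f,f) = ¼ Δ|∇f|² - (c/2)|∇f|²`, since `Γ(f,f) = ½|∇f|²`.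
Moreover `|Δf(x)|² = λ²|f(x)|²`, so the inequality `CD(n,κ)` at `x`, multiplied by `4`, is the claim.
-/


open Finset ComplexConjugate
open scoped Classical

namespace Mag

variable {V : Type*}

/-- The degree of a vertex: total weight of incident edges. -/
noncomputable def deg [Fintype V] (p : V → V → ℝ) (x : V) : ℝ := ∑ y, p x y

/-- Adjacency: positive edge weight. -/
def Adj (p : V → V → ℝ) (x y : V) : Prop := 0 < p x y

/-- Axioms of a weighted graph: symmetric nonnegative weights, no loops,
positive degrees. -/
structure IsWeightedGraph [Fintype V] (p : V → V → ℝ) : Prop where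
  symm : ∀ x y, p x y = p y x
  nonneg : ∀ x y, 0 ≤ p x y
  loopless : ∀ x, p x x = 0
  deg_pos : ∀ x, 0 < deg p x

/-- Connectivity: any two vertices are joined by a path of successively
adjacent vertices. -/
def Connected (p : V → V → ℝ) : Prop :=
  ∀ x y : V, ∃ L : List V,
    List.Chain (Adj p) x L ∧ (x :: L).getLast (List.cons_ne_nil x L) = y

/-- The graph distance from `x` to `y` is at most `n`. -/
def distLE (p : V → V → ℝ) (x y : V) (n : ℕ) : Prop :=
  ∃ L : List V, L.length ≤ n ∧ List.Chain (Adj p) x L ∧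
    (x :: L).getLast (List.cons_ne_nil x L) = y

/-- `D` is the diameter: every pair of vertices is at distance at most `D`,
and some pair is at distance at least `D`. -/
def IsDiameter (p : V → V → ℝ) (D : ℕ) : Prop :=
  (∀ x y, distLE p x y D) ∧ ∃ x y, ∀ n, distLE p x y n → D ≤ n

/-- The (normalized) graph Laplace operator on complex-valued functions. -/
noncomputable def lap [Fintype V] (p : V → V → ℝ) (f : V → ℂ) (x : V) : ℂ :=
  (deg p x : ℂ)⁻¹ * ∑ y, (p x y : ℂ) * (f y - f x)

/-- The graph Laplace operator acting on real-valued functions. -/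
noncomputable def lapR [Fintype V] (p : V → V → ℝ) (u : V → ℝ) (x : V) : ℝ :=
  (deg p x)⁻¹ * ∑ y, p x y * (u y - u x)

/-- The energy `|∇f|²(x)` of a function at a vertex. -/
noncomputable def energy [Fintype V] (p : V → V → ℝ) (f : V → ℂ) (x : V) : ℝ :=
  (deg p x)⁻¹ * ∑ y, p x y * ‖f y - f x‖ ^ 2

/-- The first curvature operator `Γ`. -/
noncomputable def gamma [Fintype V] (p : V → V → ℝ) (f g : V → ℂ) (x : V) : ℂ :=
  (1 / 2) * (lap p (fun v => f v * conj (g v)) x - f x * conj (lap p g x)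
    - lap p f x * conj (g x))

/-- The iterated (Ricci) curvature operator `Γ₂`. -/
noncomputable def gamma2 [Fintype V] (p : V → V → ℝ) (f g : V → ℂ) (x : V) : ℂ :=
  (1 / 2) * (lap p (gamma p f g) x - gamma p f (lap p g) x - gamma p (lap p f) g x)

/-- `f` satisfies the curvature-dimension inequality `CD(n,κ)`:
`Γ₂(f,f)(x) ≥ (1/n)|Δf(x)|² + κ·Γ(f,f)(x)` at every vertex. -/
def SatCD [Fintype V] (p : V → V → ℝ) (n κ : ℝ) (f : V → ℂ) : Prop :=
  ∀ x : V, (1 / n) * ‖lap p f x‖ ^ 2 + κ * (gamma p f f x).re ≤ (gamma2 p f f x).re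

/-- The magnetic Laplace operator. -/
noncomputable def magLap [Fintype V] (p : V → V → ℝ) (σ : V → V → ℂ)
    (f : V → ℂ) (x : V) : ℂ :=
  (deg p x : ℂ)⁻¹ * ∑ y, (p x y : ℂ) * (σ x y * f y - f x)

/-- The magnetic energy `|∇^σ f|²(x)`. -/
noncomputable def magEnergy [Fintype V] (p : V → V → ℝ) (σ : V → V → ℂ)
    (f : V → ℂ) (x : V) : ℝ :=
  (deg p x)⁻¹ * ∑ y, p x y * ‖σ x y * f y - f x‖ ^ 2

/-- The first magnetic curvature operator `Γ^σ`. -/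
noncomputable def magGamma [Fintype V] (p : V → V → ℝ) (σ : V → V → ℂ)
    (f g : V → ℂ) (x : V) : ℂ :=
  (1 / 2) * (magLap p σ (fun v => f v * conj (g v)) x - f x * conj (magLap p σ g x)
    - magLap p σ f x * conj (g x))

/-- The magnetic Ricci curvature operator `Γ₂^σ`. -/
noncomputable def magGamma2 [Fintype V] (p : V → V → ℝ) (σ : V → V → ℂ)
    (f g : V → ℂ) (x : V) : ℂ :=
  (1 / 2) * (lap p (magGamma p σ f g) x - magGamma p σ f (magLap p σ g) x
    - magGamma p σ (magLap p σ f) g x)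

/-- `f` satisfies the magnetic curvature-dimension inequality `CD^σ(n,κ)`. -/
def SatCDSigma [Fintype V] (p : V → V → ℝ) (σ : V → V → ℂ) (n κ : ℝ)
    (f : V → ℂ) : Prop :=
  ∀ x : V, (1 / n) * ‖magLap p σ f x‖ ^ 2 + κ * (magGamma p σ f f x).re
    ≤ (magGamma2 p σ f f x).re

/-- A signature with values in the group `S¹_ℓ` of `ℓ`-th roots of unity:
`σ_{xy}^ℓ = 1` and `σ_{yx} = σ_{xy}⁻¹` on oriented edges. -/
structure IsSignature (p : V → V → ℝ) (σ : V → V → ℂ) (ℓ : ℕ) : Prop where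
  mem : ∀ x y, Adj p x y → σ x y ^ ℓ = 1
  inv : ∀ x y, Adj p x y → σ x y * σ y x = 1

/-- The signature is entire: its values (on oriented edges) generate all of
`S¹_ℓ`, i.e. every `ℓ`-th root of unity is a product of signature values. -/
def Entire (p : V → V → ℝ) (σ : V → V → ℂ) (ℓ : ℕ) : Prop :=
  ∀ z : ℂ, z ^ ℓ = 1 →
    ∃ L : List (V × V), (∀ e ∈ L, Adj p e.1 e.2) ∧ (L.map fun e => σ e.1 e.2).prod = z

/-- The product of the signature values along the consecutive edges of a
list of vertices. -/
noncomputable def sigProd (σ : V → V → ℂ) (L : List V) : ℂ :=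
  ((L.zip L.tail).map fun e => σ e.1 e.2).prod

/-- A directed cycle: a closed walk along adjacent vertices. -/
def IsCycle (p : V → V → ℝ) (L : List V) : Prop :=
  2 ≤ L.length ∧ L.Chain' (Adj p) ∧ L.head? = L.getLast?

/-- A magnetic graph is balanced if the signature product along every directed
cycle equals `1`. -/
def Balanced (p : V → V → ℝ) (σ : V → V → ℂ) : Prop :=
  ∀ L : List V, IsCycle p L → sigProd σ L = 1

/-- A directed cycle whose signature product generates `S¹_ℓ`. -/
def IsGenCycle (p : V → V → ℝ) (σ : V → V → ℂ) (ℓ : ℕ) (L : List V) : Prop :=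
  IsCycle p L ∧ ∀ z : ℂ, z ^ ℓ = 1 → ∃ m : ℕ, sigProd σ L ^ m = z

/-- `g` is the magnetic girth: the length of a shortest directed cycle whose
signature product generates `S¹_ℓ`.  (A list of `g+1` vertices, with equal
endpoints, traverses `g` edges.) -/
def IsMagGirth (p : V → V → ℝ) (σ : V → V → ℂ) (ℓ : ℕ) (g : ℕ) : Prop :=
  (∃ L, IsGenCycle p σ ℓ L ∧ L.length = g + 1) ∧
  ∀ L, IsGenCycle p σ ℓ L → g + 1 ≤ L.length

/-- The `ℓ`-th roots of unity in `ℂ` form a finite type. -/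
noncomputable instance rootsFintype (ℓ : ℕ) [NeZero ℓ] :
    Fintype {z : ℂ // z ^ ℓ = 1} := by
  apply Fintype.ofFinset ((Polynomial.nthRoots ℓ (1 : ℂ)).toFinset)
  intro z
  rw [Multiset.mem_toFinset, Polynomial.mem_nthRoots (Nat.pos_of_ne_zero (NeZero.ne ℓ))]
  exact Iff.rfl

/-- The weight function of the lift (covering) graph `Ĝ` on `V × S¹_ℓ`. -/
noncomputable def liftP (p : V → V → ℝ) (σ : V → V → ℂ) (ℓ : ℕ) :
    V × {z : ℂ // z ^ ℓ = 1} → V × {z : ℂ // z ^ ℓ = 1} → ℝ :=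
  fun a b =>
    if Adj p a.1 b.1 ∧ (b.2 : ℂ) = (a.2 : ℂ) * σ a.1 b.1 then p a.1 b.1 else 0

/-- The lift embedding `f̂(x,ξ) = ξ·f(x)`. -/
noncomputable def liftEmb (ℓ : ℕ) (f : V → ℂ) : V × {z : ℂ // z ^ ℓ = 1} → ℂ :=
  fun a => (a.2 : ℂ) * f a.1

/-- A simple graph: all edge weights are `0` or `1`. -/
def Simple (p : V → V → ℝ) : Prop := ∀ x y, p x y = 0 ∨ p x y = 1

/-- `d` is the maximum degree of the graph. -/
def IsMaxDegree [Fintype V] (p : V → V → ℝ) (d : ℝ) : Prop :=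
  (∀ x, deg p x ≤ d) ∧ ∃ x, deg p x = d

/-- `l` is the least eigenvalue of `-Δ^σ`. -/
def IsLeastEigenvalue [Fintype V] (p : V → V → ℝ) (σ : V → V → ℂ) (l : ℝ) : Prop :=
  (∃ f : V → ℂ, f ≠ 0 ∧ ∀ x, -magLap p σ f x = (l : ℂ) * f x) ∧
  ∀ (μ : ℝ) (f : V → ℂ), f ≠ 0 → (∀ x, -magLap p σ f x = (μ : ℂ) * f x) → l ≤ μ

/-- The set of frustration values of a vertex subset `V₁`: sums
`∑_{edges {x,y} ⊆ V₁} p(x,y)|τ(x) − σ_{xy}τ(y)|` over switching functions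
`τ : V₁ → S¹_ℓ`.  (Each undirected edge is counted once, via the factor `1/2`.) -/
def frustrationSet [Fintype V] (p : V → V → ℝ) (σ : V → V → ℂ) (ℓ : ℕ)
    (V₁ : Finset V) : Set ℝ :=
  { r | ∃ τ : V → ℂ, (∀ x ∈ V₁, τ x ^ ℓ = 1) ∧
      r = (1 / 2) * ∑ x ∈ V₁, ∑ y ∈ V₁, p x y * ‖τ x - σ x y * τ y‖ }

/-- The set of Cheeger ratios `(ι^σ(V₁) + |E(V₁,V₁ᶜ)|)/vol(V₁)` over nonempty
vertex subsets `V₁`, where `ι^σ(V₁)` is the frustration index of `V₁`. -/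
def cheegerSet [Fintype V] (p : V → V → ℝ) (σ : V → V → ℂ) (ℓ : ℕ) : Set ℝ :=
  { r | ∃ V₁ : Finset V, V₁.Nonempty ∧ ∃ ι : ℝ, IsLeast (frustrationSet p σ ℓ V₁) ι ∧
      r = (ι + ∑ x ∈ V₁, ∑ y ∈ V₁ᶜ, p x y) / ∑ x ∈ V₁, deg p x }

/-- `h` is the magnetic Cheeger number `h₁^σ`. -/
def IsCheeger [Fintype V] (p : V → V → ℝ) (σ : V → V → ℂ) (ℓ : ℕ) (h : ℝ) : Prop :=
  IsLeast (cheegerSet p σ ℓ) h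

section Calculus

variable [Fintype V] (p : V → V → ℝ)

lemma lap_const_mul (c : ℂ) (f : V → ℂ) (x : V) :
    lap p (fun v => c * f v) x = c * lap p f x := by
  simp only [lap, ← mul_sub, mul_left_comm _ c, ← mul_sum]

lemma lap_ofReal (u : V → ℝ) (x : V) :
    lap p (fun v => (u v : ℂ)) x = (lapR p u x : ℂ) := by
  simp [lap, lapR]

lemma gamma_self (f : V → ℂ) (x : V) :
    gamma p f f x = (energy p f x : ℂ) / 2 := by
  have hsq : ∀ y, ((‖f y - f x‖ ^ 2 : ℝ) : ℂ) = (f y - f x) * conj (f y - f x) := fun y => by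
    rw [Complex.mul_conj', Complex.ofReal_pow]
  simp only [gamma, lap, energy, map_mul, map_sum, map_sub, map_inv₀, Complex.conj_ofReal,
    Complex.ofReal_mul, Complex.ofReal_inv, Complex.ofReal_sum, hsq, mul_sum,
    sum_mul, sum_div, ← sum_sub_distrib]
  exact sum_congr rfl fun y _ => by ring

lemma gamma_ofReal_mul_left (c : ℝ) (f g : V → ℂ) (x : V) :
    gamma p (fun v => (c : ℂ) * f v) g x = c * gamma p f g x := by
  simp only [gamma, mul_assoc, lap_const_mul]
  ring

lemma gamma_ofReal_mul_right (c : ℝ) (f g : V → ℂ) (x : V) :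
    gamma p f (fun v => (c : ℂ) * g v) x = c * gamma p f g x := by
  simp only [gamma, map_mul, Complex.conj_ofReal, mul_left_comm (f _) (c : ℂ), lap_const_mul]
  ring

lemma gamma2_self_of_lap_eq (c : ℝ) (f : V → ℂ) (hf : lap p f = fun v => (c : ℂ) * f v)
    (x : V) :
    gamma2 p f f x = ((lapR p (energy p f) x / 4 - c / 2 * energy p f x : ℝ) : ℂ) := by
  have hΓ : gamma p f f = fun v => ((1 / 2 : ℝ) : ℂ) * (energy p f v : ℂ) := by
    funext v
    rw [gamma_self]
    push_cast
    ring
  rw [gamma2, hf, gamma_ofReal_mul_left, gamma_ofReal_mul_right, hΓ, lap_const_mul, lap_ofReal]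
  push_cast
  ring

end Calculus

theorem lap_energy_bound_general {V : Type*} [Fintype V] (p : V → V → ℝ) (n κ : ℝ) (f : V → ℂ)
    (lam : ℝ) (heig : ∀ x, -lap p f x = (lam : ℂ) * f x)
    (hcd : SatCD p n κ f) (x : V) :
    -(lapR p (energy p f) x) ≤
      (2 * lam - 2 * κ) * energy p f x - (4 / n) * lam ^ 2 * ‖f x‖ ^ 2 := by
  have hlap : lap p f = fun v => ((-lam : ℝ) : ℂ) * f v := by
    funext v
    push_cast
    linear_combination -heig v
  have hcdx := hcd x
  rw [gamma2_self_of_lap_eq p (-lam) f hlap, gamma_self, hlap] at hcdx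
  simp only [Complex.ofReal_re, Complex.div_ofNat_re, norm_mul, Complex.norm_real,
    Real.norm_eq_abs, abs_neg, mul_pow, sq_abs] at hcdx
  linear_combination 4 * hcdx

/-- For a harmonic eigenfunction `f` of `−Δ` with eigenvalue
`λ > 0` satisfying `CD(n,κ)`:
`(−Δ)(|∇f|²)(x) ≤ (2λ − 2κ)|∇f|²(x) − (4/n)λ²|f(x)|²`. -/
theorem lap_energy_bound {V : Type*} [Fintype V] [Nonempty V]
    (p : V → V → ℝ) (hG : IsWeightedGraph p) (hconn : Connected p)
    (n κ : ℝ) (hn : 1 < n) (f : V → ℂ) (lam : ℝ) (hlam : 0 < lam)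
    (hf0 : f ≠ 0) (heig : ∀ x, -lap p f x = (lam : ℂ) * f x)
    (hcd : SatCD p n κ f) (x : V) :
    -(lapR p (energy p f) x) ≤
      (2 * lam - 2 * κ) * energy p f x - (4 / n) * lam ^ 2 * ‖f x‖ ^ 2 :=
  lap_energy_bound_general p n κ f lam heig hcd x

end Mag
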